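/- arXiv:1809.02295 — 5 statements merged into one kernel-verified Lean document; each statement's English description precedes it below -/
import Mathlib

section
/- Let G be a finite group of order n, let M → N be a morphism of G-modules whose image is contained in nN, and assume N has no n-torsion. Then for all i ≥ 1 the induced map on group cohomology H^i(G,M) → H^i(G,N) is zero. -/
/-!
Summing a cochain over its last variable, `(S a)(u) = ∑ₛ a(u, s)`, is a homotopy between
multiplication by `|G|` and zero in positive degrees: `S (d a) = d (S a) + (-1)ʲ |G| a`.
So `|G|` kills every cocycle up to a coboundary. If `f c = |G| x` and `N` has no `|G|`-torsion,
then `x` is again a cocycle, hence `f c = |G| x` is a coboundary.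
-/

namespace Fin

variable {α : Type*} {n : ℕ}

lemma tail_snoc (h : Fin (n + 1) → α) (s : α) :
    tail (snoc h s : Fin (n + 2) → α) = snoc (tail h) s := by
  funext i
  induction i using lastCases with
  | last => simp [tail, succ_last]
  | cast i => simp [tail, succ_castSucc, -castSucc_succ]

lemma contractNth_last (op : α → α → α) (g : Fin (n + 1) → α) :
    contractNth (last n) op g = init g :=
  funext fun i => contractNth_apply_of_lt _ _ _ _ i.isLt

lemma contractNth_castSucc_snoc_of_lt (op : α → α → α) {k : Fin (n + 1)} (hk : (k : ℕ) < n)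
    (h : Fin (n + 1) → α) (s : α) :
    contractNth k.castSucc op (snoc h s : Fin (n + 2) → α) = snoc (contractNth k op h) s := by
  funext i
  induction i using lastCases with
  | last =>
    rw [contractNth_apply_of_gt _ _ _ _ (by simp only [val_castSucc, val_last]; omega), succ_last]
    simp
  | cast i =>
    rcases lt_trichotomy (i : ℕ) k with hik | hik | hik
    · rw [contractNth_apply_of_lt _ _ _ _ (by simpa using hik), snoc_castSucc, snoc_castSucc,
        contractNth_apply_of_lt _ _ _ _ hik]
    · rw [contractNth_apply_of_eq _ _ _ _ (by simpa using hik), snoc_castSucc, succ_castSucc,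
        snoc_castSucc, snoc_castSucc, contractNth_apply_of_eq _ _ _ _ hik]
    · rw [contractNth_apply_of_gt _ _ _ _ (by simpa using hik), succ_castSucc, snoc_castSucc,
        snoc_castSucc, contractNth_apply_of_gt _ _ _ _ hik]

lemma contractNth_castSucc_last_snoc (op : α → α → α) (h : Fin (n + 1) → α) (s : α) :
    contractNth (last n).castSucc op (snoc h s : Fin (n + 2) → α)
      = snoc (init h) (op (h (last n)) s) := by
  funext i
  induction i using lastCases with
  | last =>
    rw [contractNth_apply_of_eq _ _ _ _ (by simp), snoc_castSucc, succ_last, snoc_last, snoc_last]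
  | cast i =>
    rw [contractNth_apply_of_lt _ _ _ _ (by simp), snoc_castSucc, snoc_castSucc]
    rfl

end Fin

universe u

namespace inhomogeneousCochains

open Finset

variable {k G : Type u} [CommRing k] [Group G] (A : Rep k G)

lemma d_comp_hom {B : Rep k G} (φ : A ⟶ B) {n : ℕ} (x : (Fin n → G) → A)
    (g : Fin (n + 1) → G) : d B n (fun u => φ.hom (x u)) g = φ.hom (d A n x g) := by
  simp only [d_hom_apply, map_add, map_sum, map_smul, Rep.hom_comm_apply]

variable [Fintype G] {A}

def sumLast {j : ℕ} (a : (Fin (j + 1) → G) → A) (u : Fin j → G) : A :=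
  ∑ s : G, a (Fin.snoc u s)

lemma sum_contractNth_castSucc_snoc {j : ℕ} (a : (Fin (j + 1) → G) → A) (h : Fin (j + 1) → G)
    (i : Fin (j + 1)) :
    ∑ s : G, a (Fin.contractNth i.castSucc (· * ·) (Fin.snoc h s))
      = ∑ s : G, a (Fin.snoc (Fin.contractNth i (· * ·) h) s) := by
  rcases (Nat.lt_succ_iff.mp i.isLt).lt_or_eq with hi | hi
  · simp only [Fin.contractNth_castSucc_snoc_of_lt _ hi]
  · obtain rfl : i = Fin.last j := Fin.ext hi
    simp only [Fin.contractNth_castSucc_last_snoc, Fin.contractNth_last]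
    -- the last entry of `h` is absorbed by reindexing `s ↦ h (last j) * s`
    exact Fintype.sum_equiv (Equiv.mulLeft (h (Fin.last j))) _ _ fun _ => rfl

lemma sumLast_d {j : ℕ} (a : (Fin (j + 1) → G) → A) (h : Fin (j + 1) → G) :
    sumLast (d A (j + 1) a) h = d A j (sumLast a) h + ((-1) ^ j * Fintype.card G : k) • a h := by
  have head_snoc (s : G) : (Fin.snoc h s : Fin (j + 2) → G) 0 = h 0 :=
    Fin.snoc_castSucc (α := fun _ => G) s h 0
  simp only [sumLast, d_hom_apply, ← Fin.tail_def, Fin.tail_snoc, head_snoc, map_sum,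
    sum_add_distrib, Fin.sum_univ_castSucc (n := j + 1), Fin.contractNth_last, Fin.init_snoc]
  rw [sum_comm]
  simp only [← smul_sum, sum_contractNth_castSucc_snoc, Fin.val_castSucc, Fin.val_last, sum_const,
    card_univ]
  rw [← add_assoc]
  congr 1
  rw [mul_smul, Nat.cast_smul_eq_nsmul, pow_succ, pow_succ, mul_assoc, neg_one_mul, neg_neg,
    mul_one]

lemma d_neg_one_pow_smul_sumLast {j : ℕ} {a : (Fin (j + 1) → G) → A} (ha : d A (j + 1) a = 0)
    (h : Fin (j + 1) → G) :
    d A j ((-1 : k) ^ (j + 1) • sumLast a) h = (Fintype.card G : k) • a h := by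
  have hd : d A j (sumLast a) h = -(((-1) ^ j * Fintype.card G : k) • a h) := by
    rw [eq_neg_iff_add_eq_zero, ← sumLast_d, ha]
    exact sum_const_zero
  rw [map_smul, Pi.smul_apply, hd, smul_neg, smul_smul, ← mul_assoc, ← pow_add, ← neg_smul]
  have h_odd : (-1 : k) ^ (j + 1 + j) = -1 := by
    rw [show j + 1 + j = 2 * j + 1 by ring, pow_succ, pow_mul, neg_one_sq, one_pow, one_mul]
  rw [h_odd, neg_one_mul, neg_neg]

end inhomogeneousCochains

/-- Let `G` be a finite group of order `n`, let `f : M ⟶ N` be a morphism of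
`G`-modules whose image is contained in `n • N`, and assume `N` has no `n`-torsion.  Then for all
`i ≥ 1` the induced map on group cohomology `Hⁱ(G,M) → Hⁱ(G,N)` is zero; concretely, every
`i`-cocycle of `M` (with `i = j + 1 ≥ 1`) is sent by `f` to an `i`-coboundary of `N`. -/
theorem stmt0 {G : Type} [Group G] [Fintype G] (M N : Rep ℤ G) (f : M ⟶ N)
    (hvanish : ∀ m : M, ∃ x : N, f.hom m = (Fintype.card G : ℤ) • x)
    (htf : ∀ x : N, (Fintype.card G : ℤ) • x = 0 → x = 0)
    (j : ℕ) (c : (Fin (j + 1) → G) → M)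
    (hc : inhomogeneousCochains.d M (j + 1) c = 0) :
    ∃ b : (Fin j → G) → N,
      inhomogeneousCochains.d N j b = fun g => f.hom (c g) := by
  choose x hx using fun g => hvanish (c g)
  have hx_cocycle : inhomogeneousCochains.d N (j + 1) x = 0 := by
    funext g
    apply htf
    calc (Fintype.card G : ℤ) • inhomogeneousCochains.d N (j + 1) x g
        = inhomogeneousCochains.d N (j + 1) (fun u => (Fintype.card G : ℤ) • x u) g := by
          rw [← Pi.smul_def, map_zsmul]; rfl
      _ = inhomogeneousCochains.d N (j + 1) (fun u => f.hom (c u)) g := by simp only [hx]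
      _ = 0 := by rw [inhomogeneousCochains.d_comp_hom, hc]; exact map_zero _
  -- the `•` of the statement is `zsmul`, the one of the differential the `ℤ`-module structure of `N`
  exact ⟨_, funext fun g =>
    (inhomogeneousCochains.d_neg_one_pow_smul_sumLast hx_cocycle g).trans
      ((int_smul_eq_zsmul _ _ _).trans (hx g).symm)⟩
end

section
/- In ℤ[x,x^{-1}], for any n ≥ 1, the ideal generated by (x^n−1)(x^{n+2}−1) and (x^n−1)(x^{n+4}−1) equals the ideal (x^n−1)·((x^2−1),(x^n−1)); moreover if n is odd this equals the principal ideal ((x^n−1)(x−1)), and if n is even it equals ((x^n−1)(x^2−1)). -/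
open LaurentPolynomial

lemma stmt5_Tdvd (a : ℤ) (k : ℕ) :
    (T a - 1 : LaurentPolynomial ℤ) ∣ T ((k : ℤ) * a) - 1 := by
  simpa [T_pow] using sub_dvd_pow_sub_pow (T a : LaurentPolynomial ℤ) 1 k

/-- In `ℤ[x,x⁻¹]`, for any `n ≥ 1`, the ideal generated by
`(x^n−1)(x^{n+2}−1)` and `(x^n−1)(x^{n+4}−1)` equals the ideal `(x^n−1)·((x^2−1),(x^n−1))`;
moreover if `n` is odd this equals `((x^n−1)(x−1))`, and if `n` is even it equals
`((x^n−1)(x^2−1))`. -/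
theorem stmt5 (n : ℕ) (hn : 1 ≤ n) :
    Ideal.span {((T (n : ℤ) - 1) * (T ((n : ℤ) + 2) - 1) : LaurentPolynomial ℤ),
        (T (n : ℤ) - 1) * (T ((n : ℤ) + 4) - 1)} =
      Ideal.span {(T (n : ℤ) - 1 : LaurentPolynomial ℤ)} *
        Ideal.span {(T 2 - 1 : LaurentPolynomial ℤ), T (n : ℤ) - 1} ∧
    (Odd n →
      Ideal.span {((T (n : ℤ) - 1) * (T ((n : ℤ) + 2) - 1) : LaurentPolynomial ℤ),
          (T (n : ℤ) - 1) * (T ((n : ℤ) + 4) - 1)} =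
        Ideal.span {((T (n : ℤ) - 1) * (T 1 - 1) : LaurentPolynomial ℤ)}) ∧
    (Even n →
      Ideal.span {((T (n : ℤ) - 1) * (T ((n : ℤ) + 2) - 1) : LaurentPolynomial ℤ),
          (T (n : ℤ) - 1) * (T ((n : ℤ) + 4) - 1)} =
        Ideal.span {((T (n : ℤ) - 1) * (T 2 - 1) : LaurentPolynomial ℤ)}) := by
  set m : ℤ := (n : ℤ) with hm
  set a : LaurentPolynomial ℤ := T m - 1 with ha
  set u : LaurentPolynomial ℤ := T 2 - 1 with hu
  set g1 : LaurentPolynomial ℤ := a * (T (m + 2) - 1) with hg1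
  set g2 : LaurentPolynomial ℤ := a * (T (m + 4) - 1) with hg2
  have h2 : (T (m + 2) : LaurentPolynomial ℤ) = T m * T 2 := T_add m 2
  have h4 : (T (m + 4) : LaurentPolynomial ℤ) = T m * (T 2 * T 2) := by
    rw [T_add m 4]
    congr 1
    rw [show (4 : ℤ) = 2 + 2 by norm_num, T_add]
  have hinv : (T (-2) : LaurentPolynomial ℤ) * T 2 = 1 := by
    rw [← T_add]; norm_num
  -- key ring identities
  have id1 : g1 = T 2 * (a * a) + 1 * (a * u) := by
    rw [hg1, h2, ha, hu]; ring
  have id2 : g2 = (T 2 * T 2) * (a * a) + (T 2 + 1) * (a * u) := by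
    rw [hg2, h4, ha, hu]; ring
  have id3 : a * u = (-(T 2)) * g1 + 1 * g2 := by
    rw [hg1, hg2, h2, h4, ha, hu]; ring
  have id4 : a * a = (T (-2) * (T 2 + 1)) * g1 + (-(T (-2))) * g2 := by
    rw [hg1, hg2, h2, h4, ha]
    linear_combination (-((T m - 1) * (T m - 1))) * hinv
  -- Step A : span {g1, g2} = span {a*u, a*a}
  have stepA : Ideal.span {g1, g2} = Ideal.span {a * u, a * a} := by
    apply le_antisymm <;> rw [Ideal.span_le] <;> rintro x (rfl | rfl)
    · exact Ideal.mem_span_pair.mpr ⟨1, T 2, by rw [id1]; ring⟩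
    · exact Ideal.mem_span_pair.mpr ⟨T 2 + 1, T 2 * T 2, by rw [id2]; ring⟩
    · exact Ideal.mem_span_pair.mpr ⟨-(T 2), 1, id3.symm⟩
    · exact Ideal.mem_span_pair.mpr ⟨T (-2) * (T 2 + 1), -(T (-2)), id4.symm⟩
  -- Step B : span {a} * span {u, a} = span {a*u, a*a}
  have stepB : Ideal.span {a} * Ideal.span {u, a} = Ideal.span {a * u, a * a} := by
    rw [show ({u, a} : Set (LaurentPolynomial ℤ)) = insert u {a} from rfl,
      Ideal.span_insert, Ideal.mul_sup, Ideal.span_singleton_mul_span_singleton,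
      Ideal.span_singleton_mul_span_singleton,
      show ({a * u, a * a} : Set (LaurentPolynomial ℤ)) = insert (a * u) {a * a} from rfl,
      Ideal.span_insert]
  have main : Ideal.span {g1, g2} = Ideal.span {a} * Ideal.span {u, a} :=
    stepA.trans stepB.symm
  refine ⟨main, ?_, ?_⟩
  · -- odd case
    rintro ⟨k, hk⟩
    have hpair : Ideal.span {u, a} = Ideal.span {(T 1 - 1 : LaurentPolynomial ℤ)} := by
      apply le_antisymm
      · rw [Ideal.span_le]
        rintro x (rfl | rfl)
        · refine Ideal.mem_span_singleton.mpr ?_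
          simpa [hu] using stmt5_Tdvd 1 2
        · refine Ideal.mem_span_singleton.mpr ?_
          simpa [ha, hm] using stmt5_Tdvd 1 n
      · rw [Ideal.span_le]
        rintro x rfl
        obtain ⟨q, hq⟩ := stmt5_Tdvd 2 k
        have hT : (T 1 : LaurentPolynomial ℤ) * T ((k : ℤ) * 2) = T m := by
          rw [← T_add]; congr 1; rw [hm, hk]; push_cast; ring
        refine Ideal.mem_span_pair.mpr ⟨-(T 1) * q, 1, ?_⟩
        rw [ha, hu]
        linear_combination (T 1 : LaurentPolynomial ℤ) * hq - hT
    rw [main, hpair, Ideal.span_singleton_mul_span_singleton]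
  · -- even case
    rintro ⟨k, hk⟩
    have hpair : Ideal.span {u, a} = Ideal.span {u} := by
      apply le_antisymm
      · rw [Ideal.span_le]
        rintro x (rfl | rfl)
        · exact Ideal.subset_span rfl
        · refine Ideal.mem_span_singleton.mpr ?_
          have hkm : ((k : ℤ)) * 2 = m := by rw [hm, hk]; push_cast; ring
          simpa [ha, hu, hkm] using stmt5_Tdvd 2 k
      · rw [Ideal.span_le]
        rintro x rfl
        exact Ideal.subset_span (by simp)
    rw [main, hpair, Ideal.span_singleton_mul_span_singleton]
end

section
/- Let A be a complete discrete valuation ring with finite residue field k of cardinality q, and let B be a finite étale A-algebra. Then B admits a unique A-algebra endomorphism ψ such that ψ reduces to the q-power Frobenius endomorphism on B ⊗_A k. -/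
/-!
On `B ⧸ 𝔭B`, an algebra over the finite field `A ⧸ 𝔭` with `q` elements, `x ↦ x ^ q` is an
`A`-algebra endomorphism; composing with `B → B ⧸ 𝔭B` gives `B →ₐ[A] B ⧸ 𝔭B`. Since `B` is finite
over the complete Noetherian ring `A`, it is `𝔭B`-adically complete, and because `B` is formally
étale over `A` such a map lifts uniquely to `B →ₐ[A] B`: formal smoothness lifts it through each
nilpotent thickening `B ⧸ (𝔭B)ⁿ`, formal unramifiedness makes the lift unique.
-/

open IsLocalRing

theorem IsPrecomplete.of_finite {R M : Type*} [CommRing R] [AddCommGroup M] [Module R M]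
    (I : Ideal R) [IsPrecomplete I R] [Module.Finite R M] : IsPrecomplete I M := by
  rw [← AdicCompletion.of_surjective_iff]
  intro x
  obtain ⟨t, rfl⟩ := AdicCompletion.ofTensorProduct_surjective_of_finite I M x
  induction t using TensorProduct.induction_on with
  | zero => exact ⟨0, by simp⟩
  | tmul r m =>
    obtain ⟨a, rfl⟩ := AdicCompletion.of_surjective I R r
    refine ⟨a • m, ?_⟩
    rw [AdicCompletion.ofTensorProduct_tmul, map_smul]
    exact (algebraMap_smul (AdicCompletion I R) a (AdicCompletion.of I M m)).symm
  | add s t hs ht =>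
    obtain ⟨m, hm⟩ := hs
    obtain ⟨n, hn⟩ := ht
    exact ⟨m + n, by rw [map_add, map_add, hm, hn]⟩

theorem IsAdicComplete.of_finite {R M : Type*} [CommRing R] [IsNoetherianRing R]
    [AddCommGroup M] [Module R M] (I : Ideal R) [IsAdicComplete I R] [Module.Finite R M] :
    IsAdicComplete I M where
  toIsHausdorff := .of_le_jacobson I M (IsAdicComplete.le_jacobson_bot I)
  toIsPrecomplete := .of_finite I

theorem Algebra.FormallyEtale.existsUnique_mkₐ_comp_eq_of_isAdicComplete {R A S : Type*}
    [CommRing R] [CommRing A] [Algebra R A] [Algebra.FormallyEtale R A] [CommRing S]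
    [Algebra R S] (I : Ideal S) [IsAdicComplete I S] (f : A →ₐ[R] S ⧸ I) :
    ∃! g : A →ₐ[R] S, (Ideal.Quotient.mkₐ R I).comp g = f := by
  obtain ⟨g, hg⟩ := Algebra.FormallySmooth.exists_mkₐ_comp_eq_of_isAdicComplete f
  refine ⟨g, hg, fun g' hg' => ?_⟩
  have hI : ⨅ i, I ^ i = ⊥ := by
    simpa only [Ideal.smul_eq_mul, Ideal.mul_top] using
      IsHausdorff.iInf_pow_smul (I := I) (M := S) inferInstance
  exact Algebra.FormallyUnramified.ext_of_iInf I hI fun x => congr($(hg'.trans hg.symm) x)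

section Frobenius

variable (R S : Type*) [CommRing R] [IsLocalRing R] [Fintype (ResidueField R)]
  [CommRing S] [Algebra R S]

noncomputable def frobeniusModMaximal : S →ₐ[R] S ⧸ (maximalIdeal R).map (algebraMap R S) :=
  -- `ResidueField R` is by definition `R ⧸ maximalIdeal R`, which acts on `S ⧸ 𝔪S`.
  letI : Algebra (ResidueField R) (S ⧸ (maximalIdeal R).map (algebraMap R S)) :=
    Ideal.Quotient.algebraQuotientMapQuotient
  haveI : IsScalarTower R (ResidueField R) (S ⧸ (maximalIdeal R).map (algebraMap R S)) :=
    Ideal.Quotient.tower_quotient_map_quotient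
  ((FiniteField.frobeniusAlgHom (ResidueField R) _).restrictScalars R).comp
    (Ideal.Quotient.mkₐ R _)

theorem frobeniusModMaximal_apply (x : S) :
    frobeniusModMaximal R S x = Ideal.Quotient.mk _ (x ^ Fintype.card (ResidueField R)) :=
  rfl

end Frobenius

/-- Let `A` be a complete discrete valuation ring with finite residue field of
cardinality `q`, and let `B` be a finite étale `A`-algebra.  Then `B` admits a unique `A`-algebra
endomorphism `ψ` reducing to the `q`-power Frobenius modulo the maximal ideal, i.e. with
`ψ(x) ≡ x^q mod 𝔭B` for all `x ∈ B`. -/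
theorem stmt9 (A : Type) [CommRing A] [IsDomain A] [IsDiscreteValuationRing A]
    [IsAdicComplete (IsLocalRing.maximalIdeal A) A]
    [Fintype (IsLocalRing.ResidueField A)]
    (B : Type) [CommRing B] [Algebra A B] [Module.Finite A B] [Algebra.Etale A B] :
    ∃! ψ : B →ₐ[A] B, ∀ x : B,
      ψ x - x ^ Fintype.card (IsLocalRing.ResidueField A) ∈
        Ideal.map (algebraMap A B) (IsLocalRing.maximalIdeal A) := by
  have : IsAdicComplete ((maximalIdeal A).map (algebraMap A B)) B :=
    (IsAdicComplete.map_algebraMap_iff _ _).mpr (.of_finite _)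
  simpa only [AlgHom.ext_iff, AlgHom.comp_apply, Ideal.Quotient.mkₐ_eq_mk,
    frobeniusModMaximal_apply, Ideal.Quotient.eq] using
    Algebra.FormallyEtale.existsUnique_mkₐ_comp_eq_of_isAdicComplete _ (frobeniusModMaximal A B)
end

section
/- Let A be a Dedekind domain with fraction field K, let E be a finite étale K-algebra, and consider sub-A-algebras B ⊆ E which are finitely generated as A-modules with K ⊗_A B ≅ E and which are stable under a fixed commuting family of K-algebra endomorphisms of E. Then among all such B there is a maximal one (containing all others). -/
/-!
Every integral model consists of elements integral over `A`, so it lies in the integral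
closure `O` of `A` in `E`. Conversely `O` is itself an integral model: it is a finite
`A`-module because `E` is a finite product of finite separable field extensions of `K`, it
spans `E` because every element of `E` has an integral `A`-multiple, and it is stable under
every `K`-algebra endomorphism since these preserve integrality. Hence `O` is the maximum.
-/

section

variable (A K E : Type*) [CommRing A] [IsDomain A] [Field K] [Algebra A K] [IsFractionRing A K]
  [CommRing E] [Algebra K E] [Algebra A E] [IsScalarTower A K E]

theorem span_integralClosure_eq_top [Algebra.IsAlgebraic K E] :
    Submodule.span K (integralClosure A E : Set E) = ⊤ := by
  refine eq_top_iff.2 fun x _ => ?_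
  obtain ⟨a, ha, hint⟩ := ((IsFractionRing.isAlgebraic_iff A K E).2
    (Algebra.IsAlgebraic.isAlgebraic x)).exists_integral_multiple
  have ha' : algebraMap A K a ≠ 0 := IsFractionRing.to_map_ne_zero_of_mem_nonZeroDivisors
    (mem_nonZeroDivisors_of_ne_zero ha)
  have hx : x = (algebraMap A K a)⁻¹ • (a • x) := by
    rw [← algebraMap_smul K a x, inv_smul_smul₀ ha']
  rw [hx]
  exact Submodule.smul_mem _ _ (Submodule.subset_span hint)

theorem Algebra.Etale.finite_integralClosure [IsIntegrallyClosed A] [IsNoetherianRing A]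
    [Module.Finite K E] [Algebra.Etale K E] : Module.Finite A (integralClosure A E) := by
  have : IsArtinianRing E := isArtinian_of_tower K inferInstance
  have : IsReduced E := Algebra.FormallyUnramified.isReduced_of_field K E
  have (m : MaximalSpectrum E) : Module.Finite A (integralClosure A (E ⧸ m.asIdeal)) := by
    let := Ideal.Quotient.field m.asIdeal
    have : Module.Finite K (E ⧸ m.asIdeal) := Module.Finite.of_surjective
      (Ideal.Quotient.mkₐ K m.asIdeal).toLinearMap Ideal.Quotient.mk_surjective
    have : Algebra.IsSeparable K (E ⧸ m.asIdeal) := Algebra.FormallyUnramified.isSeparable K _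
    exact IsIntegralClosure.finite A K (E ⧸ m.asIdeal) _
  let f : integralClosure A E →ₐ[A] ∀ m : MaximalSpectrum E, integralClosure A (E ⧸ m.asIdeal) :=
    AlgHom.pi fun m => (Ideal.Quotient.mkₐ A m.asIdeal).mapIntegralClosure
  have hf : Function.Injective f := fun x y h => Subtype.ext <|
    (IsArtinianRing.equivPi E).injective <| funext fun m => congrArg Subtype.val (congrFun h m)
  exact Module.Finite.of_injective f.toLinearMap hf

end

theorem stmt17_general (A : Type) [CommRing A] [IsDedekindDomain A]
    (K : Type) [Field K] [Algebra A K] [IsFractionRing A K]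
    (E : Type) [CommRing E] [Algebra K E] [Algebra A E] [IsScalarTower A K E]
    [Module.Finite K E] [Algebra.Etale K E]
    (Ψ : Set (E →ₐ[K] E)) :
    ∃ Bmax : Subalgebra A E,
      ((Subalgebra.toSubmodule Bmax).FG ∧ Submodule.span K (Bmax : Set E) = ⊤ ∧
        ∀ ψ ∈ Ψ, ∀ b ∈ Bmax, ψ b ∈ Bmax) ∧
      ∀ B : Subalgebra A E,
        ((Subalgebra.toSubmodule B).FG ∧ Submodule.span K (B : Set E) = ⊤ ∧
          ∀ ψ ∈ Ψ, ∀ b ∈ B, ψ b ∈ B) → B ≤ Bmax := by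
  refine ⟨integralClosure A E, ⟨?_, span_integralClosure_eq_top A K E, ?_⟩, ?_⟩
  · exact Module.Finite.iff_fg.1 (Algebra.Etale.finite_integralClosure A K E)
  · exact fun ψ _ b hb => hb.map (ψ.restrictScalars A)
  · exact fun B hB x hx => IsIntegral.of_mem_of_fg B hB.1 x hx

/-- Let `A` be a Dedekind domain with fraction field `K` and `E` a finite
étale `K`-algebra with a commuting family `Ψ` of `K`-algebra endomorphisms.  Among the integral
models of `E` — sub-`A`-algebras `B ⊆ E`, finite as `A`-modules, with `K·B = E`, stable under
every `ψ ∈ Ψ` — there is (provided one exists) a maximal one containing all others. -/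
theorem stmt17 (A : Type) [CommRing A] [IsDomain A] [IsDedekindDomain A]
    (K : Type) [Field K] [Algebra A K] [IsFractionRing A K]
    (E : Type) [CommRing E] [Algebra K E] [Algebra A E] [IsScalarTower A K E]
    [Module.Finite K E] [Algebra.Etale K E]
    (Ψ : Set (E →ₐ[K] E)) (hcomm : ∀ ψ ∈ Ψ, ∀ φ ∈ Ψ, ψ.comp φ = φ.comp ψ)
    (hexists : ∃ B : Subalgebra A E, (Subalgebra.toSubmodule B).FG ∧
        Submodule.span K (B : Set E) = ⊤ ∧ ∀ ψ ∈ Ψ, ∀ b ∈ B, ψ b ∈ B) :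
    ∃ Bmax : Subalgebra A E,
      ((Subalgebra.toSubmodule Bmax).FG ∧ Submodule.span K (Bmax : Set E) = ⊤ ∧
        ∀ ψ ∈ Ψ, ∀ b ∈ Bmax, ψ b ∈ Bmax) ∧
      ∀ B : Subalgebra A E,
        ((Subalgebra.toSubmodule B).FG ∧ Submodule.span K (B : Set E) = ⊤ ∧
          ∀ ψ ∈ Ψ, ∀ b ∈ B, ψ b ∈ B) → B ≤ Bmax :=
  stmt17_general A K E Ψ
end

section
/- Let A be a Dedekind domain with fraction field K, B a finite flat A-algebra with a commuting family of endomorphisms, and suppose B is maximal among finite sub-A-algebras of K ⊗_A B stable under the family. If a group G acts on B by automorphisms commuting with the family, then the invariant ring B^G is likewise maximal among finite stable sub-A-algebras of K ⊗_A B^G containing it. -/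
/-- `lambdaNormalOver A K B Ψ B₀` says: the sub-`A`-algebra `B₀` of `B` is maximal
(Λ-normal over `A`) among sub-`A`-algebras of `K ⊗_A B₀ ⊆ K ⊗_A B` which are finite over `A`,
contain `B₀`, and are stable under (the base changes of) the endomorphism family `Ψ`. -/
def lambdaNormalOver (A K B : Type) [CommRing A] [Field K] [Algebra A K]
    [CommRing B] [Algebra A B] {ι : Type} (Ψ : ι → (B →ₐ[A] B))
    (B₀ : Subalgebra A B) : Prop :=
  ∀ C : Subalgebra A (TensorProduct A K B),
    B₀.map (Algebra.TensorProduct.includeRight : B →ₐ[A] TensorProduct A K B) ≤ C →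
    (Subalgebra.toSubmodule C).FG →
    (∀ (i : ι), ∀ c ∈ C, Algebra.TensorProduct.map (AlgHom.id A K) (Ψ i) c ∈ C) →
    (C : Set (TensorProduct A K B)) ⊆
      (Submodule.span K
        ((Algebra.TensorProduct.includeRight : B →ₐ[A] TensorProduct A K B) ''
          (B₀ : Set B)) : Set (TensorProduct A K B)) →
    C = B₀.map (Algebra.TensorProduct.includeRight : B →ₐ[A] TensorProduct A K B)

/-- Let `A` be a Dedekind domain with fraction field `K`, `B` a finite flat
`A`-algebra with a commuting family `Ψ` of endomorphisms which is maximal (Λ-normal) in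
`K ⊗_A B`.  If a group `G` acts on `B` by automorphisms commuting with `Ψ`, then the invariant
ring `B^G` is likewise maximal among finite stable sub-`A`-algebras of `K ⊗_A B^G`. -/
theorem stmt18 (A : Type) [CommRing A] [IsDomain A] [IsDedekindDomain A]
    (K : Type) [Field K] [Algebra A K] [IsFractionRing A K]
    (B : Type) [CommRing B] [Algebra A B] [Module.Finite A B] [Module.Flat A B]
    (ι : Type) (Ψ : ι → (B →ₐ[A] B))
    (hcomm : ∀ i j, (Ψ i).comp (Ψ j) = (Ψ j).comp (Ψ i))
    (G : Type) [Group G] (ρ : G →* (B ≃ₐ[A] B))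
    (hGΨ : ∀ (g : G) (i : ι) (b : B), ρ g (Ψ i b) = Ψ i (ρ g b))
    (hmax : lambdaNormalOver A K B Ψ ⊤) :
    lambdaNormalOver A K B Ψ
      (⨅ g : G, AlgHom.equalizer ((ρ g : B ≃ₐ[A] B) : B →ₐ[A] B) (AlgHom.id A B)) := by

  classical
  intro C hC0 hCfg hCΨ hCspan
  set f : B →ₐ[A] TensorProduct A K B := Algebra.TensorProduct.includeRight with hf
  set B₀ : Subalgebra A B :=
    ⨅ g : G, AlgHom.equalizer ((ρ g : B ≃ₐ[A] B) : B →ₐ[A] B) (AlgHom.id A B) with hB₀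
  have hmemB₀ : ∀ b : B, b ∈ B₀ ↔ ∀ g : G, ρ g b = b := by
    intro b
    simp [hB₀, Algebra.mem_iInf, AlgHom.mem_equalizer]
  -- injectivity of includeRight
  have hf_inj : Function.Injective f := by
    have h1 : Function.Injective (LinearMap.rTensor B (Algebra.linearMap A K)) :=
      Module.Flat.rTensor_preserves_injective_linearMap _ (IsFractionRing.injective A K)
    have h2 : (f : B → TensorProduct A K B) =
        (LinearMap.rTensor B (Algebra.linearMap A K)) ∘ (TensorProduct.lid A B).symm := by
      funext b
      simp [hf, LinearMap.rTensor_tmul]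
    rw [h2]
    exact h1.comp (TensorProduct.lid A B).symm.injective
  set S : Subalgebra A (TensorProduct A K B) := (⊤ : Subalgebra A B).map f with hS
  -- S is FG as a submodule
  have hSfg : (Subalgebra.toSubmodule S).FG := by
    have : Subalgebra.toSubmodule S = Submodule.map f.toLinearMap ⊤ := by
      ext x
      simp [hS, Subalgebra.mem_map, Submodule.mem_map]
    rw [this]
    exact (Module.finite_def.mp inferInstance).map _
  -- the sup is FG as a submodule
  have hsupfg : (Subalgebra.toSubmodule (S ⊔ C)).FG := by
    rw [← Subalgebra.mul_toSubmodule]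
    exact hSfg.mul hCfg
  -- Ψ-stability of the sup
  have hsupΨ : ∀ (i : ι), ∀ c ∈ S ⊔ C,
      Algebra.TensorProduct.map (AlgHom.id A K) (Ψ i) c ∈ S ⊔ C := by
    intro i c hc
    have hmap : (S ⊔ C).map (Algebra.TensorProduct.map (AlgHom.id A K) (Ψ i)) ≤ S ⊔ C := by
      rw [Algebra.map_sup]
      apply sup_le
      · refine le_trans ?_ le_sup_left
        rintro x ⟨y, hy, rfl⟩
        rcases hy with ⟨b, -, rfl⟩
        refine ⟨Ψ i b, trivial, ?_⟩
        simp [hf]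
      · refine le_trans ?_ le_sup_right
        rintro x ⟨y, hy, rfl⟩
        exact hCΨ i y hy
    exact hmap ⟨c, hc, rfl⟩
  -- K-span of image of B is everything
  have hspanTop : (Submodule.span K (f '' ((⊤ : Subalgebra A B) : Set B))) = ⊤ := by
    rw [eq_top_iff]
    rintro x -
    induction x using TensorProduct.induction_on with
    | zero => exact Submodule.zero_mem _
    | tmul k b =>
        have h : (k : K) ⊗ₜ[A] b = k • ((1 : K) ⊗ₜ[A] b) := by
          rw [TensorProduct.smul_tmul', smul_eq_mul, mul_one]
        rw [h]
        exact Submodule.smul_mem _ _ (Submodule.subset_span ⟨b, trivial, rfl⟩)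
    | add x y hx hy => exact Submodule.add_mem _ hx hy
  -- apply maximality of B in K ⊗ B
  have hmain : S ⊔ C = S := by
    refine hmax (S ⊔ C) le_sup_left hsupfg hsupΨ ?_
    intro x _
    rw [SetLike.mem_coe, hspanTop]
    trivial
  have hCS : C ≤ S := le_sup_right.trans (le_of_eq hmain)
  -- fixed points of the extended G-action
  have key : ∀ g : G, ∀ x ∈ Submodule.span K (f '' (B₀ : Set B)),
      Algebra.TensorProduct.map (AlgHom.id A K) ((ρ g : B ≃ₐ[A] B) : B →ₐ[A] B) x = x := by
    intro g
    set φ := Algebra.TensorProduct.map (AlgHom.id A K) ((ρ g : B ≃ₐ[A] B) : B →ₐ[A] B) with hφ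
    have hsmul : ∀ (k : K) (y : TensorProduct A K B), φ (k • y) = k • φ y := by
      intro k y
      rw [Algebra.smul_def, Algebra.smul_def, map_mul]
      congr 1
      rw [Algebra.TensorProduct.algebraMap_apply]
      simp [hφ]
    set M : Submodule K (TensorProduct A K B) :=
      { carrier := {x | φ x = x}
        add_mem' := fun ha hb => by simp_all [map_add]
        zero_mem' := by simp
        smul_mem' := fun k x hx => by
          have hx' : φ x = x := hx
          simp only [Set.mem_setOf_eq, hsmul, hx'] } with hM
    intro x hx
    have : Submodule.span K (f '' (B₀ : Set B)) ≤ M := by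
      rw [Submodule.span_le]
      rintro y ⟨b, hb, rfl⟩
      show φ (f b) = f b
      have hb' : ρ g b = b := (hmemB₀ b).mp hb g
      simp [hφ, hf, hb']
    exact this hx
  -- conclude
  refine le_antisymm ?_ hC0
  intro x hx
  rcases hCS hx with ⟨b, -, rfl⟩
  have hspan : f b ∈ Submodule.span K (f '' (B₀ : Set B)) := hCspan hx
  have hbB₀ : b ∈ B₀ := by
    rw [hmemB₀]
    intro g
    apply hf_inj
    have := key g (f b) hspan
    rw [← this]
    simp [hf]
  exact ⟨b, hbB₀, rfl⟩
end
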